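/- arXiv:2211.05815 — 2 statements merged into one kernel-verified Lean document; each statement's English description precedes it below -/
import Mathlib

section
/- The model vector (-1, 2, 1, -5, 4) solves every sequence of the form x(n) = q(n) + f(n), where q is a polynomial of degree at most 2 and f satisfies the Fibonacci recurrence f(n+2) = f(n+1) + f(n) for all n. -/
/-!
The characteristic polynomial of the model vector factors as
`X^5 - 4X^4 + 5X^3 - X^2 - 2X + 1 = (X - 1)^3 * (X^2 - X - 1)`.
The factor `(X - 1)^3` (a third difference) kills polynomials of degree at most 2, and the factor
`X^2 - X - 1` kills Fibonacci-rule sequences; the recurrence is linear, so it holds for their sum.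
-/

theorem model_recurrence_of_fibonacci_rule {f : ℤ → ℝ}
    (hf : ∀ n : ℤ, f (n + 2) = f (n + 1) + f n) (n : ℤ) :
    -f n + 2 * f (n + 1) + f (n + 2) - 5 * f (n + 3) + 4 * f (n + 4) = f (n + 5) := by
  have h₀ := hf n
  have h₁ := hf (n + 1)
  have h₂ := hf (n + 2)
  have h₃ := hf (n + 3)
  norm_num [add_assoc] at h₁ h₂ h₃
  linear_combination h₀ - 3 * h₁ + 3 * h₂ - h₃

theorem model_recurrence_of_quadratic {a b c : ℝ} {q : ℝ → ℝ}
    (hq : ∀ t, q t = a * t ^ 2 + b * t + c) (t : ℝ) :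
    -q t + 2 * q (t + 1) + q (t + 2) - 5 * q (t + 3) + 4 * q (t + 4) = q (t + 5) := by
  simp only [hq]
  ring

/-- The model vector (-1, 2, 1, -5, 4) solves every sequence that is a sum of a
polynomial of degree at most 2 and a Fibonacci-rule sequence. -/
theorem stmt_3 (a b c : ℝ) (f x : ℤ → ℝ)
    (hf : ∀ n : ℤ, f (n + 2) = f (n + 1) + f n)
    (hx : ∀ n : ℤ, x n = (a * (n : ℝ) ^ 2 + b * (n : ℝ) + c) + f n) :
    ∀ n : ℤ,
      (-1) * x n + 2 * x (n + 1) + 1 * x (n + 2) + (-5) * x (n + 3)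
        + 4 * x (n + 4) = x (n + 5) := by
  intro n
  have hq := model_recurrence_of_quadratic (q := fun t => a * t ^ 2 + b * t + c) (fun _ => rfl) n
  simp only [hx]
  push_cast
  linear_combination hq + model_recurrence_of_fibonacci_rule hf n
end

section
/- Model Composition Theorem: Let a, b ∈ ℝⁿ and suppose a solves (in the length-n sense) the sequence y : ℤ → ℝ, i.e. for all m, Σᵢ aᵢ·y(m+i-1) = y(m+n). Define c ∈ ℝ^{2n} by c_k = a_{k-n} + b_{k-n} - Σ_{j+ℓ=k+1, 1≤j,ℓ≤n} a_j·b_ℓ, where a_{k-n} and b_{k-n} are taken to be 0 when k ≤ n, and the convolution sum is empty when k = 2n. Then c solves y in the length-2n sense: for all m, Σ_{k=1}^{2n} c_k·y(m+k-1) = y(m+2n). -/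
/-!
With `A = ∑ aᵢ Xⁱ` and `B = ∑ bᵢ Xⁱ`, the characteristic polynomial `X²ⁿ - ∑ cₖ Xᵏ` of `c` is
`(Xⁿ - A)(Xⁿ - B)`, and the shift operator `Xⁿ - A` already annihilates `y`. Concretely,
`∑ cₖ y(m+k)` splits into `∑ aᵢ y(m+n+i) + ∑ bₗ y(m+n+l)` minus the convolution term
`∑ⱼ ∑ₗ aⱼ bₗ y(m+j+l)`; summing over `j` first and using the recurrence for `a` turns the
convolution term into `∑ bₗ y(m+l+n)`, which cancels the `b`-term, and the recurrence once more
turns the `a`-term into `y(m+2n)`.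
-/

theorem Fin.sum_dite_le_mul {R : Type*} [NonUnitalNonAssocSemiring R] {N n p : ℕ}
    (hN : N = n + p) (f : Fin p → R) (g : ℕ → R) :
    ∑ k : Fin N, (if h : n ≤ (k : ℕ) then f ⟨k - n, by omega⟩ else 0) * g k
      = ∑ i : Fin p, f i * g (n + i) := by
  subst hN
  have low (i : Fin n) : ¬ n ≤ i := by omega
  simp [Fin.sum_univ_add, low]

theorem Fin.sum_convolution_mul {R : Type*} [NonUnitalNonAssocSemiring R] {n p N : ℕ}
    (hN : n + p ≤ N + 1) (F : Fin n → Fin p → R) (g : ℕ → R) :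
    ∑ k : Fin N, (∑ j : Fin n, ∑ l : Fin p, if (j : ℕ) + l = k then F j l else 0) * g k
      = ∑ j : Fin n, ∑ l : Fin p, F j l * g (j + l) := by
  simp only [Finset.sum_mul, ite_mul, zero_mul]
  rw [Finset.sum_comm]
  refine Finset.sum_congr rfl fun j _ => ?_
  rw [Finset.sum_comm]
  refine Finset.sum_congr rfl fun l _ => ?_
  rw [Finset.sum_eq_single ⟨j + l, by omega⟩ (fun k _ hk => if_neg fun h => hk (Fin.ext h.symm))
    (by simp)]
  simp

/-- Model Composition Theorem: if `a` solves `y` in the length-`n` sense, then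
the composition `c` of `a` and `b` solves `y` in the length-`2n` sense. -/
theorem stmt_5 (n : ℕ) (a b : Fin n → ℝ) (c : Fin (2 * n) → ℝ) (y : ℤ → ℝ)
    (ha : ∀ m : ℤ, (∑ i : Fin n, a i * y (m + (i : ℕ))) = y (m + (n : ℕ)))
    (hc : ∀ k : Fin (2 * n),
      c k =
        (if h : n ≤ (k : ℕ) then a ⟨(k : ℕ) - n, by have := k.isLt; omega⟩ else 0)
        + (if h : n ≤ (k : ℕ) then b ⟨(k : ℕ) - n, by have := k.isLt; omega⟩ else 0)
        - ∑ j : Fin n, ∑ l : Fin n,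
            if (j : ℕ) + (l : ℕ) = (k : ℕ) then a j * b l else 0) :
    ∀ m : ℤ, (∑ k : Fin (2 * n), c k * y (m + (k : ℕ))) = y (m + (2 * n : ℕ)) := by
  intro m
  have convolution_eq : ∑ j : Fin n, ∑ l : Fin n, a j * b l * y (m + ((j + l : ℕ) : ℤ))
      = ∑ l : Fin n, b l * y (m + ((n + l : ℕ) : ℤ)) := by
    rw [Finset.sum_comm]
    refine Finset.sum_congr rfl fun l _ => ?_
    rw [show m + ((n + l : ℕ) : ℤ) = m + l + n by push_cast; ring, ← ha, Finset.mul_sum]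
    refine Finset.sum_congr rfl fun j _ => ?_
    rw [show m + ((j + l : ℕ) : ℤ) = m + l + j by push_cast; ring]
    ring
  have ha_shift : ∑ i : Fin n, a i * y (m + ((n + i : ℕ) : ℤ)) = y (m + (2 * n : ℕ)) := by
    rw [show m + ((2 * n : ℕ) : ℤ) = m + n + n by push_cast; ring, ← ha]
    simp only [Nat.cast_add, add_assoc]
  simp only [hc, sub_mul, add_mul, Finset.sum_sub_distrib, Finset.sum_add_distrib]
  rw [Fin.sum_dite_le_mul (two_mul n) a (fun k => y (m + k)),
    Fin.sum_dite_le_mul (two_mul n) b (fun k => y (m + k)),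
    Fin.sum_convolution_mul (by omega) (fun j l => a j * b l) (fun k => y (m + k)),
    convolution_eq, ha_shift]
  ring
end
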